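/- arXiv:2510.03790 — 4 statements merged into one kernel-verified Lean document; each statement's English description precedes it below -/
import Mathlib

section
/- For the free motion of a particle in ℝⁿ interrupted by reflections off a hypersurface that is a cone with vertex at the origin, the quantity I = Σ_{i<j} (xⁱvʲ − xʲvⁱ)² is preserved under billiard reflection at any boundary point. -/
/-!
By Lagrange's identity, `Σ_{i<j} (pⁱvʲ − pʲvⁱ)² = ‖p‖²‖v‖² − ⟪p, v⟫²`. The reflected velocity is the
image of `v` under the orthogonal reflection in the hyperplane `ν^⊥`; this isometry fixes `p`
because `⟪p, ν⟫ = 0`, so it preserves both `‖v‖` and `⟪p, v⟫`.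
-/

open Finset

section Lagrange

variable {ι : Type*} [Fintype ι] [LinearOrder ι] [LocallyFiniteOrderTop ι]
  [LocallyFiniteOrderBot ι]

theorem Finset.sum_sum_eq_sum_add_sum_sum_Ioi {M : Type*} [AddCommMonoid M] (f : ι → ι → M) :
    ∑ i, ∑ j, f i j = ∑ i, f i i + ∑ i, ∑ j ∈ Ioi i, (f j i + f i j) := by
  rw [sum_sum_Ioi_add_eq_sum_sum_off_diag, ← sum_add_distrib, sum_comm]
  exact sum_congr rfl fun i _ ↦ Fintype.sum_eq_add_sum_compl i (f · i)

theorem Finset.sum_sum_Ioi_sq_mul_sub_mul {R : Type*} [CommRing R] (a b : ι → R) :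
    ∑ i, ∑ j ∈ Ioi i, (a i * b j - a j * b i) ^ 2 =
      (∑ i, a i ^ 2) * (∑ i, b i ^ 2) - (∑ i, a i * b i) ^ 2 := by
  rw [sum_mul_sum, sq (∑ i, a i * b i), sum_mul_sum, sum_sum_eq_sum_add_sum_sum_Ioi,
    sum_sum_eq_sum_add_sum_sum_Ioi, add_sub_add_comm, ← sum_sub_distrib, ← sum_sub_distrib]
  have hdiag : ∑ i, (a i ^ 2 * b i ^ 2 - a i * b i * (a i * b i)) = 0 :=
    sum_eq_zero fun i _ ↦ by ring
  rw [hdiag, zero_add]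
  exact sum_congr rfl fun i _ ↦ by rw [← sum_sub_distrib]; exact sum_congr rfl fun j _ ↦ by ring

theorem EuclideanSpace.sum_sum_Ioi_sq_mul_sub_mul (a b : EuclideanSpace ℝ ι) :
    ∑ i, ∑ j ∈ Ioi i, (a i * b j - a j * b i) ^ 2 = ‖a‖ ^ 2 * ‖b‖ ^ 2 - inner ℝ a b ^ 2 := by
  simp only [Finset.sum_sum_Ioi_sq_mul_sub_mul, EuclideanSpace.norm_sq_eq, PiLp.inner_apply,
    Real.norm_eq_abs, sq_abs, RCLike.inner_apply, conj_trivial, mul_comm (b _)]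

end Lagrange

theorem Submodule.reflection_orthogonal_singleton_apply {E : Type*} [NormedAddCommGroup E]
    [InnerProductSpace ℝ E] {ν : E} (hν : ‖ν‖ = 1) (v : E) :
    (ℝ ∙ ν)ᗮ.reflection v = v - (2 * inner ℝ v ν) • ν := by
  rw [reflection_orthogonal_apply, reflection_apply, starProjection_unit_singleton ℝ hν,
    real_inner_comm]
  module

/-- The squared angular-momentum bivector `I = Σ_{i<j} (xⁱvʲ − xʲvⁱ)²` is
preserved by the billiard reflection `v ↦ v − 2⟨v, ν⟩ν` at a boundary point
`p` of a cone with vertex at the origin (where the unit normal `ν` satisfies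
`⟨p, ν⟩ = 0`). -/
theorem cone_billiard_angular_momentum_invariant
    (n : ℕ) (p v ν : EuclideanSpace ℝ (Fin n))
    (hν : ‖ν‖ = 1) (hpν : (inner ℝ p ν : ℝ) = 0)
    (v' : EuclideanSpace ℝ (Fin n))
    (hv' : v' = v - (2 * (inner ℝ v ν : ℝ)) • ν) :
    ∑ i : Fin n, ∑ j ∈ Finset.Ioi i, (p i * v' j - p j * v' i) ^ 2 =
      ∑ i : Fin n, ∑ j ∈ Finset.Ioi i, (p i * v j - p j * v i) ^ 2 := by
  set R := (ℝ ∙ ν)ᗮ.reflection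
  have hv'R : v' = R v := by rw [hv', Submodule.reflection_orthogonal_singleton_apply hν]
  have hpR : R p = p :=
    Submodule.reflection_mem_subspace_eq_self
      ((Submodule.mem_orthogonal_singleton_iff_inner_left).2 hpν)
  rw [EuclideanSpace.sum_sum_Ioi_sq_mul_sub_mul, EuclideanSpace.sum_sum_Ioi_sq_mul_sub_mul, hv'R,
    R.norm_map, ← R.inner_map_map p v, hpR]
end

section
/- Let γ(s) = e^{As} γ₀ where A is a real skew-symmetric n×n matrix and γ₀ ∈ ℝⁿ. Then for any two parameters x and y, the inner product of the chord γ(y) − γ(x) with the tangent vector γ'(x) equals the inner product of the chord with γ'(y): ⟨γ(y) − γ(x), γ'(x)⟩ = ⟨γ(y) − γ(x), γ'(y)⟩. -/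
/-!
The exponential plays no role: for a skew-symmetric `A` the quadratic form `w ↦ w ⬝ᵥ A *ᵥ w`
vanishes, and for any two points `u`, `v` the difference of the two sides is that form evaluated
at the chord `w = v - u`.
-/

open Matrix

namespace Matrix

variable {m R : Type*} [Fintype m] [CommRing R] {A : Matrix m m R}

theorem dotProduct_mulVec_self_eq_zero_of_transpose_eq_neg [NoZeroDivisors R] [CharZero R]
    (hA : Aᵀ = -A) (v : m → R) : v ⬝ᵥ A *ᵥ v = 0 :=
  CharZero.eq_neg_self_iff.mp <|
    calc v ⬝ᵥ A *ᵥ v = Aᵀ *ᵥ v ⬝ᵥ v := by rw [dotProduct_mulVec, mulVec_transpose]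
      _ = -(v ⬝ᵥ A *ᵥ v) := by rw [hA, neg_mulVec, neg_dotProduct, dotProduct_comm]

theorem sub_dotProduct_mulVec_eq_of_transpose_eq_neg [NoZeroDivisors R] [CharZero R]
    (hA : Aᵀ = -A) (u v : m → R) : (v - u) ⬝ᵥ A *ᵥ u = (v - u) ⬝ᵥ A *ᵥ v := by
  have hchord := dotProduct_mulVec_self_eq_zero_of_transpose_eq_neg hA (v - u)
  rw [mulVec_sub, dotProduct_sub, sub_eq_zero] at hchord
  exact hchord.symm

end Matrix

/-- For the curve `γ(s) = e^{As} γ₀` with `A` skew-symmetric, any chord makes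
equal "projections" on the tangent vectors `γ'(s) = A e^{As} γ₀` at its two
endpoints: `⟨γ(y) − γ(x), γ'(x)⟩ = ⟨γ(y) − γ(x), γ'(y)⟩`. -/
theorem wire_chord_equal_tangent_projections
    (n : ℕ) (A : Matrix (Fin n) (Fin n) ℝ) (hA : Aᵀ = -A)
    (γ₀ : Fin n → ℝ) (x y : ℝ) :
    ((NormedSpace.exp (y • A)).mulVec γ₀ - (NormedSpace.exp (x • A)).mulVec γ₀) ⬝ᵥ
        ((A * NormedSpace.exp (x • A)).mulVec γ₀) =
      ((NormedSpace.exp (y • A)).mulVec γ₀ - (NormedSpace.exp (x • A)).mulVec γ₀) ⬝ᵥ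
        ((A * NormedSpace.exp (y • A)).mulVec γ₀) := by
  rw [← mulVec_mulVec, ← mulVec_mulVec]
  exact sub_dotProduct_mulVec_eq_of_transpose_eq_neg hA _ _
end

section
/- For the symplectic billiard in an ellipse, homothetic concentric ellipses are invariant: if x₁, x₂, x₃ are consecutive points of a symplectic billiard orbit on the ellipse (i.e., x₃ − x₁ is parallel to the tangent direction at x₂), then the chords [x₁, x₂] and [x₂, x₃] are tangent to a common concentric homothetic ellipse. -/
/-- The quadratic form of the ellipse `x²/a² + y²/b² = 1`. -/
noncomputable def ellipseForm (a b : ℝ) (p : ℝ × ℝ) : ℝ :=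
  p.1 ^ 2 / a ^ 2 + p.2 ^ 2 / b ^ 2

/-- The line through distinct points `p, q` is tangent to the concentric
homothetic ellipse `{ellipseForm a b = c}`: the form attains the value `c` on
the line and is `≥ c` everywhere on the line. -/
noncomputable def LineTangentToHomotheticEllipse (a b c : ℝ) (p q : ℝ × ℝ) : Prop :=
  (∀ t : ℝ, c ≤ ellipseForm a b (p + t • (q - p))) ∧
    ∃ t : ℝ, ellipseForm a b (p + t • (q - p)) = c

/-- A chord of the unit-level ellipse is tangent to the homothetic ellipse of
level `(1 + B(p,q))/2`, where `B` is the polarization of the form. -/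
lemma chord_tangent (a b : ℝ) (ha : 0 < a) (hb : 0 < b) (p q : ℝ × ℝ)
    (hp : ellipseForm a b p = 1) (hq : ellipseForm a b q = 1) :
    LineTangentToHomotheticEllipse a b
      ((1 + (p.1 * q.1 / a ^ 2 + p.2 * q.2 / b ^ 2)) / 2) p q := by
  unfold ellipseForm at hp hq
  have key : ∀ t : ℝ, ellipseForm a b (p + t • (q - p)) -
      (1 + (p.1 * q.1 / a ^ 2 + p.2 * q.2 / b ^ 2)) / 2 =
      ((q.1 - p.1) ^ 2 / a ^ 2 + (q.2 - p.2) ^ 2 / b ^ 2) * (t - 1 / 2) ^ 2 := by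
    intro t
    simp only [ellipseForm, Prod.fst_add, Prod.snd_add, Prod.smul_fst, Prod.smul_snd,
      Prod.fst_sub, Prod.snd_sub, smul_eq_mul]
    linear_combination (3 / 4 - t) * hp + (t - 1 / 4) * hq
  constructor
  · intro t
    have h := key t
    have hm : 0 ≤ ((q.1 - p.1) ^ 2 / a ^ 2 + (q.2 - p.2) ^ 2 / b ^ 2) * (t - 1 / 2) ^ 2 := by
      positivity
    linarith
  · exact ⟨1 / 2, by have h := key (1 / 2 : ℝ); simpa using by linarith⟩

/-- **Symplectic billiard in an ellipse.** If `x₁, x₂, x₃` are consecutive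
points of a symplectic billiard orbit on the ellipse `x²/a² + y²/b² = 1`
(i.e. `x₃ − x₁` is parallel to the tangent direction at `x₂`, equivalently is
orthogonal to the gradient of the form at `x₂`), then the chords `[x₁, x₂]`
and `[x₂, x₃]` are tangent to a common concentric homothetic ellipse. -/
theorem symplectic_billiard_ellipse_invariant_caustic
    (a b : ℝ) (ha : 0 < a) (hb : 0 < b)
    (x₁ x₂ x₃ : ℝ × ℝ)
    (h₁ : ellipseForm a b x₁ = 1) (h₂ : ellipseForm a b x₂ = 1)
    (h₃ : ellipseForm a b x₃ = 1)
    (hne₁₂ : x₁ ≠ x₂) (hne₂₃ : x₂ ≠ x₃) (hne₁₃ : x₁ ≠ x₃)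
    (hrefl : (x₃.1 - x₁.1) * x₂.1 / a ^ 2 + (x₃.2 - x₁.2) * x₂.2 / b ^ 2 = 0) :
    ∃ c : ℝ, 0 < c ∧ LineTangentToHomotheticEllipse a b c x₁ x₂ ∧
      LineTangentToHomotheticEllipse a b c x₂ x₃ := by
  have ha' : a ≠ 0 := ne_of_gt ha
  have hb' : b ≠ 0 := ne_of_gt hb
  obtain ⟨e, he⟩ : ∃ e : ℝ, e = x₁.1 * x₂.1 / a ^ 2 + x₁.2 * x₂.2 / b ^ 2 := ⟨_, rfl⟩
  -- the two polarization values agree thanks to the reflection law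
  have heq : x₂.1 * x₃.1 / a ^ 2 + x₂.2 * x₃.2 / b ^ 2 = e := by
    rw [he]; field_simp; field_simp at hrefl; linarith
  -- positivity of the common level
  have hpos : 0 < (1 + e) / 2 := by
    by_contra hle
    push_neg at hle
    have he1 : e ≤ -1 := by linarith
    unfold ellipseForm at h₁ h₂ h₃
    have hs12 : 0 ≤ (x₁.1 + x₂.1) ^ 2 / a ^ 2 + (x₁.2 + x₂.2) ^ 2 / b ^ 2 := by positivity
    have hs12' : (x₁.1 + x₂.1) ^ 2 / a ^ 2 + (x₁.2 + x₂.2) ^ 2 / b ^ 2 = 2 + 2 * e := by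
      rw [he]; field_simp; field_simp at h₁ h₂; linarith
    have hz12 : (x₁.1 + x₂.1) ^ 2 / a ^ 2 + (x₁.2 + x₂.2) ^ 2 / b ^ 2 = 0 := by linarith
    have hx1 : x₁.1 + x₂.1 = 0 := by
      have h1 : 0 ≤ (x₁.1 + x₂.1) ^ 2 / a ^ 2 := by positivity
      have h2 : 0 ≤ (x₁.2 + x₂.2) ^ 2 / b ^ 2 := by positivity
      have : (x₁.1 + x₂.1) ^ 2 / a ^ 2 = 0 := by linarith
      have := (div_eq_zero_iff.mp this).resolve_right (by positivity)
      exact pow_eq_zero_iff (n := 2) (by norm_num) |>.mp this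
    have hy1 : x₁.2 + x₂.2 = 0 := by
      have h1 : 0 ≤ (x₁.1 + x₂.1) ^ 2 / a ^ 2 := by positivity
      have h2 : 0 ≤ (x₁.2 + x₂.2) ^ 2 / b ^ 2 := by positivity
      have : (x₁.2 + x₂.2) ^ 2 / b ^ 2 = 0 := by linarith
      have := (div_eq_zero_iff.mp this).resolve_right (by positivity)
      exact pow_eq_zero_iff (n := 2) (by norm_num) |>.mp this
    have hs23 : 0 ≤ (x₂.1 + x₃.1) ^ 2 / a ^ 2 + (x₂.2 + x₃.2) ^ 2 / b ^ 2 := by positivity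
    have hs23' : (x₂.1 + x₃.1) ^ 2 / a ^ 2 + (x₂.2 + x₃.2) ^ 2 / b ^ 2 = 2 + 2 * e := by
      rw [← heq]; field_simp; field_simp at h₂ h₃; linarith
    have hz23 : (x₂.1 + x₃.1) ^ 2 / a ^ 2 + (x₂.2 + x₃.2) ^ 2 / b ^ 2 = 0 := by linarith
    have hx2 : x₂.1 + x₃.1 = 0 := by
      have h1 : 0 ≤ (x₂.1 + x₃.1) ^ 2 / a ^ 2 := by positivity
      have h2 : 0 ≤ (x₂.2 + x₃.2) ^ 2 / b ^ 2 := by positivity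
      have : (x₂.1 + x₃.1) ^ 2 / a ^ 2 = 0 := by linarith
      have := (div_eq_zero_iff.mp this).resolve_right (by positivity)
      exact pow_eq_zero_iff (n := 2) (by norm_num) |>.mp this
    have hy2 : x₂.2 + x₃.2 = 0 := by
      have h1 : 0 ≤ (x₂.1 + x₃.1) ^ 2 / a ^ 2 := by positivity
      have h2 : 0 ≤ (x₂.2 + x₃.2) ^ 2 / b ^ 2 := by positivity
      have : (x₂.2 + x₃.2) ^ 2 / b ^ 2 = 0 := by linarith
      have := (div_eq_zero_iff.mp this).resolve_right (by positivity)
      exact pow_eq_zero_iff (n := 2) (by norm_num) |>.mp this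
    exact hne₁₃ (Prod.ext (by linarith) (by linarith))
  refine ⟨(1 + e) / 2, hpos, ?_, ?_⟩
  · have := chord_tangent a b ha hb x₁ x₂ h₁ h₂
    rwa [← he] at this
  · have := chord_tangent a b ha hb x₂ x₃ h₂ h₃
    rwa [heq] at this
end

section
/- Magnetic reflection preserves tangency to concentric circles in a disk: for the magnetic billiard in the unit disk with constant magnetic field, the distance from the center of the Larmor circle of the trajectory to the center of the disk is preserved under reflection at the boundary. -/
open Real

/-- Rotation by `π/2` in the plane. -/
def rotHalfPi (z : ℝ × ℝ) : ℝ × ℝ := (-z.2, z.1)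

/-- Euclidean norm on `ℝ × ℝ`. -/
noncomputable def eNorm2 (z : ℝ × ℝ) : ℝ := Real.sqrt (z.1 ^ 2 + z.2 ^ 2)

/-- **Magnetic billiard in the unit disk.** In a constant magnetic field of
magnitude `B > 0`, the particle moves along Larmor circles of radius `1/B`,
with center `C = p − (1/B)·Jv` where `v` is the unit velocity at the point
`p` and `J` is the rotation by `π/2`. Under the billiard reflection
`v ↦ v' = v − 2⟨v, p⟩p` at a point `p` of the unit circle, the distance from
the center of the Larmor circle to the center of the disk is preserved:
`|C'| = |C|`. -/
theorem magnetic_billiard_disk_center_distance_invariant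
    (B : ℝ) (hB : 0 < B)
    (p v : ℝ × ℝ)
    (hp : p.1 ^ 2 + p.2 ^ 2 = 1)
    (hv : v.1 ^ 2 + v.2 ^ 2 = 1)
    (v' C C' : ℝ × ℝ)
    (hv' : v' = v - (2 * (v.1 * p.1 + v.2 * p.2)) • p)
    (hC : C = p - (1 / B) • rotHalfPi v)
    (hC' : C' = p - (1 / B) • rotHalfPi v') :
    eNorm2 C' = eNorm2 C := by
  subst hv' hC hC'
  unfold eNorm2 rotHalfPi
  congr 1
  simp only [Prod.fst_sub, Prod.snd_sub, Prod.smul_fst, Prod.smul_snd, smul_eq_mul]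
  field_simp
  ring_nf
  nlinarith [sq_nonneg (v.1*p.1 + v.2*p.2)]
end
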